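/- Let H be a hypothesis class and S, S' be independent i.i.d. samples of size m from a distribution D, with losses in [0,1]. Then for any ε > 0, (1 − 2·exp(−ε²m/2)) · P[sup_{h∈H} |L_S(h) − L_D(h)| > ε] ≤ P[sup_{h∈H} |L_S(h) − L_{S'}(h)| > ε/2], where L_S(h) is the empirical average loss of h on S and L_D(h) its expectation under D. -/

import Mathlib

open Finset MeasureTheory

/-!
If some `h ∈ H` has `|L_S h - L_D h| > ε`, Hoeffding's inequality puts an independent ghost
sample `S'` within `ε / 2` of `L_D h` with probability at least `1 - 2 exp (-ε² m / 2)`, and then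
`|L_S h - L_{S'} h| > ε / 2` by the triangle inequality. Integrating this bound over the `S`
of the first event (Fubini) gives the claim; countability of `H` makes the double-sample event
measurable.
-/

open ProbabilityTheory Real

lemma ProbabilityTheory.HasSubgaussianMGF.measureReal_abs_ge_le {Ω : Type*} [MeasurableSpace Ω]
    {μ : Measure Ω} {X : Ω → ℝ} {c : NNReal} (hX : HasSubgaussianMGF X c μ) {t : ℝ} (ht : 0 ≤ t) :
    μ.real {ω | t ≤ |X ω|} ≤ 2 * exp (-t ^ 2 / (2 * c)) := by
  have hsplit : {ω | t ≤ |X ω|} = {ω | t ≤ X ω} ∪ {ω | t ≤ (-X) ω} := by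
    ext ω; simp [le_abs]
  calc μ.real {ω | t ≤ |X ω|}
      ≤ μ.real {ω | t ≤ X ω} + μ.real {ω | t ≤ (-X) ω} := hsplit ▸ measureReal_union_le _ _
    _ ≤ exp (-t ^ 2 / (2 * c)) + exp (-t ^ 2 / (2 * c)) :=
        add_le_add (hX.measure_ge_le ht) (hX.neg.measure_ge_le ht)
    _ = 2 * exp (-t ^ 2 / (2 * c)) := by ring

lemma MeasureTheory.Measure.mul_le_prod_apply {α β : Type*} [MeasurableSpace α]
    [MeasurableSpace β] {μ : Measure α} {ν : Measure β} [SFinite ν] {s : Set α}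
    {t : Set (α × β)} (ht : MeasurableSet t) {c : ENNReal}
    (h : ∀ x ∈ s, c ≤ ν (Prod.mk x ⁻¹' t)) :
    c * μ s ≤ μ.prod ν t := by
  rw [Measure.prod_apply ht, ← setLIntegral_const]
  exact (setLIntegral_mono (measurable_measure_prodMk_left ht) h).trans
    (setLIntegral_le_lintegral _ _)

/-- No nonemptiness or boundedness assumption: in those cases `sSup s = 0 ≤ a`. -/
lemma Real.exists_lt_of_lt_sSup {s : Set ℝ} {a : ℝ} (ha : 0 ≤ a) (h : a < sSup s) :
    ∃ b ∈ s, a < b := by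
  by_contra! hs
  exact (Real.sSup_le hs ha).not_gt h

section EmpiricalMean

variable {Z : Type*} {m : ℕ} {h : Z → ℝ}

noncomputable def empiricalMean (h : Z → ℝ) (S : Fin m → Z) : ℝ := (1 / m : ℝ) * ∑ i, h (S i)

lemma empiricalMean_mem_Icc (hrange : ∀ z, h z ∈ Set.Icc (0 : ℝ) 1) (S : Fin m → Z) :
    empiricalMean h S ∈ Set.Icc (0 : ℝ) 1 := by
  have hsum : ∑ i, h (S i) ≤ m := by
    simpa using sum_le_sum fun i (_ : i ∈ univ) => (hrange (S i)).2
  refine ⟨mul_nonneg (by positivity) (sum_nonneg fun i _ => (hrange (S i)).1), ?_⟩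
  calc empiricalMean h S ≤ (1 / m : ℝ) * m := by unfold empiricalMean; gcongr
    _ ≤ 1 := by rw [one_div]; exact inv_mul_le_one_of_le₀ le_rfl (by positivity)

lemma abs_empiricalMean_sub_empiricalMean_le_one (hrange : ∀ z, h z ∈ Set.Icc (0 : ℝ) 1)
    (S S' : Fin m → Z) : |empiricalMean h S - empiricalMean h S'| ≤ 1 := by
  obtain ⟨h₀, h₁⟩ := empiricalMean_mem_Icc hrange S
  obtain ⟨h₀', h₁'⟩ := empiricalMean_mem_Icc hrange S'
  exact abs_sub_le_of_nonneg_of_le h₀ h₁ h₀' h₁'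

variable [MeasurableSpace Z]

lemma measurable_empiricalMean (hmeas : Measurable h) :
    Measurable (empiricalMean (m := m) h) := by
  unfold empiricalMean; fun_prop

lemma measurableSet_exists_lt_abs_empiricalMean_sub {H : Set (Z → ℝ)} (hcount : H.Countable)
    (hmeas : ∀ h ∈ H, Measurable h) (a : ℝ) :
    MeasurableSet {p : (Fin m → Z) × (Fin m → Z) |
      ∃ h ∈ H, a < |empiricalMean h p.1 - empiricalMean h p.2|} := by
  have hunion : {p : (Fin m → Z) × (Fin m → Z) |
      ∃ h ∈ H, a < |empiricalMean h p.1 - empiricalMean h p.2|}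
      = ⋃ h ∈ H, {p | a < |empiricalMean h p.1 - empiricalMean h p.2|} := by
    ext; simp
  rw [hunion]
  exact .biUnion hcount fun h hh => measurableSet_lt measurable_const
    ((measurable_empiricalMean (hmeas h hh)).comp measurable_fst |>.sub
      ((measurable_empiricalMean (hmeas h hh)).comp measurable_snd)).abs

variable {D : Measure Z} [IsProbabilityMeasure D]

lemma hasSubgaussianMGF_eval_sub_integral (hmeas : Measurable h)
    (hrange : ∀ z, h z ∈ Set.Icc (0 : ℝ) 1) (i : Fin m) :
    HasSubgaussianMGF (fun S : Fin m → Z => h (S i) - ∫ z, h z ∂D) 4⁻¹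
      (Measure.pi fun _ => D) := by
  have := hasSubgaussianMGF_of_mem_Icc (μ := Measure.pi fun _ : Fin m => D)
    (X := fun S => h (S i)) (hmeas.comp (measurable_pi_apply i)).aemeasurable
    (ae_of_all _ fun S => hrange (S i))
  rw [integral_comp_eval hmeas.aestronglyMeasurable] at this
  convert this using 1
  norm_num

lemma measureReal_abs_sum_sub_integral_ge_le (hmeas : Measurable h)
    (hrange : ∀ z, h z ∈ Set.Icc (0 : ℝ) 1) {t : ℝ} (ht : 0 ≤ t) :
    (Measure.pi fun _ : Fin m => D).real {S | t ≤ |∑ i, (h (S i) - ∫ z, h z ∂D)|}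
      ≤ 2 * exp (-2 * t ^ 2 / m) := by
  have hindep : iIndepFun (fun (i : Fin m) (S : Fin m → Z) => h (S i) - ∫ z, h z ∂D)
      (Measure.pi fun _ => D) :=
    iIndepFun_pi (X := fun _ z => h z - ∫ z, h z ∂D) fun _ => by fun_prop
  have := (HasSubgaussianMGF.sum_of_iIndepFun hindep (s := univ)
    fun i _ => hasSubgaussianMGF_eval_sub_integral hmeas hrange i).measureReal_abs_ge_le ht
  convert this using 3
  push_cast
  simp only [sum_const, card_univ, Fintype.card_fin, nsmul_eq_mul]
  ring

lemma measureReal_abs_empiricalMean_sub_integral_ge_le (hm : 0 < m) (hmeas : Measurable h)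
    (hrange : ∀ z, h z ∈ Set.Icc (0 : ℝ) 1) {t : ℝ} (ht : 0 ≤ t) :
    (Measure.pi fun _ : Fin m => D).real {S | t ≤ |empiricalMean h S - ∫ z, h z ∂D|}
      ≤ 2 * exp (-2 * m * t ^ 2) := by
  have hm' : (0 : ℝ) < m := Nat.cast_pos.2 hm
  have hset : {S | t ≤ |empiricalMean h S - ∫ z, h z ∂D|}
      = {S : Fin m → Z | m * t ≤ |∑ i, (h (S i) - ∫ z, h z ∂D)|} := by
    ext S
    have : empiricalMean h S - ∫ z, h z ∂D = (∑ i, (h (S i) - ∫ z, h z ∂D)) / m := by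
      simp only [empiricalMean, sum_sub_distrib, sum_const, card_univ, Fintype.card_fin,
        nsmul_eq_mul]
      field_simp
    simp only [Set.mem_ofPred_eq, this, abs_div, Nat.abs_cast, le_div_iff₀ hm', mul_comm]
  rw [hset]
  convert measureReal_abs_sum_sub_integral_ge_le (m := m) (D := D) hmeas hrange
    (t := m * t) (by positivity) using 3
  field_simp

lemma one_sub_le_measureReal_abs_empiricalMean_sub_gt_half (hm : 0 < m) (hmeas : Measurable h)
    (hrange : ∀ z, h z ∈ Set.Icc (0 : ℝ) 1) {ε : ℝ} (hε : 0 < ε) {S : Fin m → Z}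
    (hS : ε < |empiricalMean h S - ∫ z, h z ∂D|) :
    1 - 2 * exp (-(ε ^ 2) * m / 2) ≤ (Measure.pi fun _ : Fin m => D).real
      {S' | ε / 2 < |empiricalMean h S - empiricalMean h S'|} := by
  set C := {S' : Fin m → Z | ε / 2 ≤ |empiricalMean h S' - ∫ z, h z ∂D|}
  have hC : MeasurableSet C :=
    measurableSet_le measurable_const ((measurable_empiricalMean hmeas).sub_const _).abs
  have hCc : Cᶜ ⊆ {S' | ε / 2 < |empiricalMean h S - empiricalMean h S'|} := by
    intro S' hS'
    simp only [C, Set.mem_compl_iff, Set.mem_ofPred_eq, not_le] at hS' ⊢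
    have := abs_sub_abs_le_abs_sub (empiricalMean h S - ∫ z, h z ∂D)
      (empiricalMean h S' - ∫ z, h z ∂D)
    rw [sub_sub_sub_cancel_right] at this
    linarith
  calc 1 - 2 * exp (-(ε ^ 2) * m / 2)
      = 1 - 2 * exp (-2 * m * (ε / 2) ^ 2) := by ring_nf
    _ ≤ 1 - (Measure.pi fun _ : Fin m => D).real C := by
        gcongr
        exact measureReal_abs_empiricalMean_sub_integral_ge_le hm hmeas hrange (by positivity)
    _ = (Measure.pi fun _ : Fin m => D).real Cᶜ := by simp [measureReal_compl hC]
    _ ≤ _ := measureReal_mono hCc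

end EmpiricalMean

theorem ghost_sampling_general {Z : Type*} [MeasurableSpace Z]
    (D : Measure Z) [IsProbabilityMeasure D] (m : ℕ) (hm : 0 < m)
    (H : Set (Z → ℝ)) (hcount : H.Countable)
    (hmeas : ∀ h ∈ H, Measurable h) (hrange : ∀ h ∈ H, ∀ z, h z ∈ Set.Icc (0:ℝ) 1)
    (ε : ℝ) (hε : 0 < ε) :
    (1 - 2 * Real.exp (-(ε ^ 2) * m / 2)) *
      ((Measure.pi fun _ : Fin m => D)
        {S : Fin m → Z | sSup {r : ℝ | ∃ h ∈ H,
          r = |(1 / m : ℝ) * ∑ i, h (S i) - ∫ z, h z ∂D|} > ε}).toReal ≤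
    (((Measure.pi fun _ : Fin m => D).prod (Measure.pi fun _ : Fin m => D))
        {p : (Fin m → Z) × (Fin m → Z) | sSup {r : ℝ | ∃ h ∈ H,
          r = |(1 / m : ℝ) * ∑ i, h (p.1 i) - (1 / m : ℝ) * ∑ i, h (p.2 i)|} > ε / 2}).toReal := by
  set μ := Measure.pi fun _ : Fin m => D
  set δ := 2 * exp (-(ε ^ 2) * m / 2)
  rcases le_or_gt (1 - δ) 0 with hδ | hδ
  · exact (mul_nonpos_of_nonpos_of_nonneg hδ ENNReal.toReal_nonneg).trans ENNReal.toReal_nonneg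
  set A := {S : Fin m → Z | ∃ h ∈ H, ε < |empiricalMean h S - ∫ z, h z ∂D|}
  set B := {p : (Fin m → Z) × (Fin m → Z) |
    ∃ h ∈ H, ε / 2 < |empiricalMean h p.1 - empiricalMean h p.2|}
  have hA : {S : Fin m → Z | sSup {r : ℝ | ∃ h ∈ H,
      r = |(1 / m : ℝ) * ∑ i, h (S i) - ∫ z, h z ∂D|} > ε} ⊆ A := fun S hS => by
    obtain ⟨_, ⟨h, hh, rfl⟩, hlt⟩ := Real.exists_lt_of_lt_sSup hε.le hS
    exact ⟨h, hh, hlt⟩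
  have hB : B ⊆ {p : (Fin m → Z) × (Fin m → Z) | sSup {r : ℝ | ∃ h ∈ H,
      r = |(1 / m : ℝ) * ∑ i, h (p.1 i) - (1 / m : ℝ) * ∑ i, h (p.2 i)|} > ε / 2} := by
    rintro p ⟨h, hh, hlt⟩
    refine hlt.trans_le (le_csSup ⟨1, ?_⟩ ⟨h, hh, rfl⟩)
    rintro _ ⟨g, hg, rfl⟩
    exact abs_empiricalMean_sub_empiricalMean_le_one (hrange g hg) p.1 p.2
  have hghost : ∀ S ∈ A, ENNReal.ofReal (1 - δ) ≤ μ (Prod.mk S ⁻¹' B) := by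
    rintro S ⟨h, hh, hS⟩
    rw [ENNReal.ofReal_le_iff_le_toReal (measure_ne_top _ _)]
    exact (one_sub_le_measureReal_abs_empiricalMean_sub_gt_half hm (hmeas h hh) (hrange h hh) hε
      hS).trans (measureReal_mono fun S' hS' => ⟨h, hh, hS'⟩)
  calc (1 - δ) * (μ _).toReal ≤ (1 - δ) * (μ A).toReal := by
        gcongr; exact measure_ne_top _ _
    _ = (ENNReal.ofReal (1 - δ) * μ A).toReal := by
        rw [ENNReal.toReal_mul, ENNReal.toReal_ofReal hδ.le]
    _ ≤ (μ.prod μ B).toReal :=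
        ENNReal.toReal_mono (measure_ne_top _ _) (Measure.mul_le_prod_apply
          (measurableSet_exists_lt_abs_empiricalMean_sub hcount hmeas _) hghost)
    _ ≤ _ := ENNReal.toReal_mono (measure_ne_top _ _) (measure_mono hB)

/-- Ghost-sampling (double sample) lemma.  Each `h ∈ H` is identified with its
loss function `Z → [0,1]`; `L_S h` is the empirical average on the sample `S`
and `L_D h = ∫ h ∂D` its expectation. -/
theorem ghost_sampling {Z : Type*} [MeasurableSpace Z]
    (D : Measure Z) [IsProbabilityMeasure D] (m : ℕ) (hm : 0 < m)
    (H : Set (Z → ℝ)) (hne : H.Nonempty) (hcount : H.Countable)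
    (hmeas : ∀ h ∈ H, Measurable h) (hrange : ∀ h ∈ H, ∀ z, h z ∈ Set.Icc (0:ℝ) 1)
    (ε : ℝ) (hε : 0 < ε) :
    (1 - 2 * Real.exp (-(ε ^ 2) * m / 2)) *
      ((Measure.pi fun _ : Fin m => D)
        {S : Fin m → Z | sSup {r : ℝ | ∃ h ∈ H,
          r = |(1 / m : ℝ) * ∑ i, h (S i) - ∫ z, h z ∂D|} > ε}).toReal ≤
    (((Measure.pi fun _ : Fin m => D).prod (Measure.pi fun _ : Fin m => D))
        {p : (Fin m → Z) × (Fin m → Z) | sSup {r : ℝ | ∃ h ∈ H,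
          r = |(1 / m : ℝ) * ∑ i, h (p.1 i) - (1 / m : ℝ) * ∑ i, h (p.2 i)|} > ε / 2}).toReal :=
  ghost_sampling_general D m hm H hcount hmeas hrange ε hε
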